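/- arXiv:2311.12267 — 3 statements merged into one kernel-verified Lean document; each statement's English description precedes it below -/
import Mathlib

section
/- Correctness of parent identification (Proposition 5.2 and dimension formula (*)). Let G be a DAG on [d], let H ∈ ℝ^{d×n} (n ≥ d) have full row rank with rows h_1,…,h_d, and let {B_k}_{k∈[K]} be a family of d×d real matrices with (B_k)_{ij} ≠ 0 ⟺ j ∈ \bar{pa}_G(i) that is node-level non-degenerate with respect to G. Set M_k = B_k H. Let S = {s_1,…,s_m} ⊆ [d] be an ordered ancestral set such that every prefix {s_1,…,s_{m′}} (0 ≤ m′ ≤ m) is ancestral, and let i ∉ S satisfy pa_G(i) ⊆ S. For 0 ≤ m′ ≤ m define r_{m′} = dim span{ proj_{W_{k,m′}^⊥}((M_k)_i) : k ∈ [K] }, where W_{k,m′} = span{(M_k)_{s_j} : 1 ≤ j ≤ m′} ⊆ ℝ^n and proj denotes orthogonal projection in ℝ^n. Then (*) r_{m′} = |\bar{pa}_G(i) ∖ {s_1,…,s_{m′}}| for every 0 ≤ m′ ≤ m; consequently, for every 1 ≤ m′ ≤ m, s_{m′} ∈ pa_G(i) if and only if r_{m′} = r_{m′−1} − 1, so the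 set {s_{m′} : 1 ≤ m′ ≤ m, r_{m′} = r_{m′−1} − 1} equals pa_G(i). -/
open Matrix MeasureTheory

/-- `E i j` means there is a directed edge `i → j`. A DAG has no directed cycles. -/
def IsDAG {d : ℕ} (E : Fin d → Fin d → Prop) : Prop :=
  ∀ i, ¬ Relation.TransGen E i i

/-- The set of parents of `i`. -/
def pa {d : ℕ} (E : Fin d → Fin d → Prop) (i : Fin d) : Set (Fin d) := {j | E j i}

/-- The set of children of `i`. -/
def ch {d : ℕ} (E : Fin d → Fin d → Prop) (i : Fin d) : Set (Fin d) := {j | E i j}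

/-- `pa_G(i) ∪ {i}`. -/
def barPa {d : ℕ} (E : Fin d → Fin d → Prop) (i : Fin d) : Set (Fin d) := insert i (pa E i)

/-- `ch_G(i) ∪ {i}`. -/
def barCh {d : ℕ} (E : Fin d → Fin d → Prop) (i : Fin d) : Set (Fin d) := insert i (ch E i)

/-- The effect-domination set `dom_G(i) = {j ∈ pa_G(i) : ch_G(i) ⊆ ch_G(j)}`. -/
def domSet {d : ℕ} (E : Fin d → Fin d → Prop) (i : Fin d) : Set (Fin d) :=
  {j | j ∈ pa E i ∧ ch E i ⊆ ch E j}

/-- `dom_G(i) ∪ {i}`. -/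
def barDom {d : ℕ} (E : Fin d → Fin d → Prop) (i : Fin d) : Set (Fin d) :=
  insert i (domSet E i)

/-- Ancestors of `i`: nodes with a directed path to `i`. -/
def ans {d : ℕ} (E : Fin d → Fin d → Prop) (i : Fin d) : Set (Fin d) :=
  {j | Relation.TransGen E j i}

/-- A set is ancestral if it is closed under taking ancestors. -/
def Ancestral {d : ℕ} (E : Fin d → Fin d → Prop) (S : Set (Fin d)) : Prop :=
  ∀ j ∈ S, ans E j ⊆ S

/-- The support of `B` matches the graph: `B i j ≠ 0 ↔ j ∈ \bar{pa}_G(i)`. -/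
def SupportMatches {d : ℕ} (E : Fin d → Fin d → Prop) (B : Matrix (Fin d) (Fin d) ℝ) : Prop :=
  ∀ i j, B i j ≠ 0 ↔ j ∈ barPa E i

/-- Node-level non-degeneracy: for every node `i`, the span of the `i`-th rows
`(B_k)_i` has dimension `|pa_G(i)| + 1`. -/
def NodeNonDegenerate {d K : ℕ} (E : Fin d → Fin d → Prop)
    (B : Fin K → Matrix (Fin d) (Fin d) ℝ) : Prop :=
  ∀ i, Module.finrank ℝ (Submodule.span ℝ (Set.range fun k => B k i)) = (pa E i).ncard + 1

/-- View a row vector in `ℝ^n` as an element of Euclidean space. -/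
noncomputable def toE {n : ℕ} (v : Fin n → ℝ) : EuclideanSpace ℝ (Fin n) :=
  (WithLp.equiv 2 (Fin n → ℝ)).symm v

/-- Orthogonal projection of `v` onto the orthogonal complement `W^⊥`. -/
noncomputable def projPerp {n : ℕ} (W : Submodule ℝ (EuclideanSpace ℝ (Fin n)))
    (v : EuclideanSpace ℝ (Fin n)) : EuclideanSpace ℝ (Fin n) :=
  (Submodule.orthogonalProjectionOnto Wᗮ v : EuclideanSpace ℝ (Fin n))

/-- The prefix `{s_1, …, s_{m'}}` of the ordered set `S`. -/
def prefixSet {d m : ℕ} (s : Fin m → Fin d) (m' : ℕ) : Set (Fin d) :=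
  {x | ∃ j : Fin m, (j : ℕ) < m' ∧ s j = x}

/-!
Let `L : (Fin d →₀ ℝ) → ℝⁿ` send a coefficient vector to the corresponding combination of the
rows of `H`; it is injective since `H` has full row rank, and `(M_k)_x = L ((B_k)_x)`.
The rows of `B_k` are triangular with respect to the DAG with nonzero diagonal, so on an
ancestral prefix `P` (added one node at a time) the rows `(B_k)_x`, `x ∈ P`, span the coordinate
subspace `ℝ^P`. Hence `W_{k,m'} = L (ℝ^P)` does not depend on `k`, and composing `L` with the
projection onto its orthogonal complement gives a map with kernel exactly `ℝ^P`.
Non-degeneracy says that the rows `(B_k)_i` span `ℝ^{\bar{pa}(i)}`, whose image under such a map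
has dimension `|\bar{pa}(i) \ P|`. Adding `s_{m'}` to the prefix lowers this count by one exactly
when `s_{m'}` is a parent of `i`.
-/

open Finsupp Module

section Supported

variable {K V ι : Type*} [Field K] [AddCommGroup V] [Module K V]

theorem finrank_supported [Fintype ι] (T : Set ι) : finrank K (supported K K T) = T.ncard := by
  classical
  rw [(supportedEquivFinsupp T).finrank_eq, finrank_finsupp_self, ← Nat.card_eq_fintype_card,
    Nat.card_coe_set_eq]

theorem finrank_map_supported_of_ker_eq [Fintype ι] {f : (ι →₀ K) →ₗ[K] V} {P : Set ι}
    (hf : LinearMap.ker f = supported K K P) (T : Set ι) :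
    finrank K ((supported K K T).map f) = (T \ P).ncard := by
  have hmap : (supported K K T).map f = (supported K K (T \ P)).map f := by
    refine le_antisymm ?_ (Submodule.map_mono (supported_mono Set.sdiff_subset))
    calc (supported K K T).map f
        ≤ (supported K K (T \ P ∪ P)).map f := Submodule.map_mono (supported_mono (by simp))
      _ = (supported K K (T \ P)).map f := by
        rw [supported_union, Submodule.map_sup, ← hf]
        exact sup_eq_left.mpr (Submodule.map_le_iff_le_comap.mpr (LinearMap.ker_le_comap f))
  have hinj : Function.Injective (f.domRestrict (supported K K (T \ P))) :=
    LinearMap.injective_domRestrict_iff.mpr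
      (hf ▸ disjoint_supported_supported Set.disjoint_sdiff_left)
  rw [hmap, ← LinearMap.range_domRestrict, LinearMap.finrank_range_of_inj hinj, finrank_supported]

theorem supported_insert_le_span {b : ι → ι →₀ K} {P : Set ι} {t : ι}
    (hP : supported K K P ≤ Submodule.span K (b '' P)) (ht : b t t ≠ 0)
    (hbt : ↑(b t).support ⊆ insert t P) :
    supported K K (insert t P) ≤ Submodule.span K (b '' insert t P) := by
  classical
  have hmono : Submodule.span K (b '' P) ≤ Submodule.span K (b '' insert t P) :=
    Submodule.span_mono (Set.image_mono (Set.subset_insert t P))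
  have herase : erase t (b t) ∈ supported K K P := by
    rw [mem_supported, support_erase, Finset.coe_erase]
    exact fun j hj => (hbt hj.1).resolve_left hj.2
  have hsingle : single t (b t t) ∈ Submodule.span K (b '' insert t P) := by
    rw [← add_sub_cancel_right (single t (b t t)) (erase t (b t)), single_add_erase]
    exact Submodule.sub_mem _ (Submodule.subset_span ⟨t, Set.mem_insert t P, rfl⟩)
      (hmono (hP herase))
  rw [supported_eq_span_single, Set.image_insert_eq, Submodule.span_le, Set.insert_subset_iff]
  refine ⟨?_, ?_⟩
  · simpa [Finsupp.smul_single, ht] using Submodule.smul_mem _ (b t t)⁻¹ hsingle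
  · exact (Submodule.span_le.mp (supported_eq_span_single K P ▸ hP)).trans hmono

end Supported

noncomputable def Matrix.rowFinsupp {m n K : Type*} [Finite n] [Semiring K] (B : Matrix m n K)
    (x : m) : n →₀ K :=
  (linearEquivFunOnFinite K K n).symm (B x)

@[simp]
theorem Matrix.rowFinsupp_apply {m n K : Type*} [Finite n] [Semiring K] (B : Matrix m n K)
    (x : m) (j : n) : B.rowFinsupp x j = B x j :=
  rfl

theorem Set.ncard_sdiff_insert_add_one_iff {α : Type*} {A P : Set α} (hA : A.Finite) {t : α}
    (ht : t ∉ P) : (A \ insert t P).ncard + 1 = (A \ P).ncard ↔ t ∈ A := by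
  have hdiff : A \ insert t P = (A \ P) \ {t} := by
    ext; simp only [Set.mem_sdiff, Set.mem_insert_iff, Set.mem_singleton_iff]; tauto
  rw [hdiff]
  by_cases htA : t ∈ A
  · exact iff_of_true (Set.ncard_sdiff_singleton_add_one ⟨htA, ht⟩ hA.sdiff) htA
  · rw [Set.sdiff_singleton_eq_self fun h => htA h.1]
    simpa using htA

section Graph

variable {d : ℕ} {E : Fin d → Fin d → Prop}

theorem IsDAG.notMem_pa (hG : IsDAG E) (i : Fin d) : i ∉ pa E i :=
  fun h => hG i (Relation.TransGen.single h)

theorem IsDAG.ncard_barPa (hG : IsDAG E) (i : Fin d) : (barPa E i).ncard = (pa E i).ncard + 1 :=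
  Set.ncard_insert_of_notMem (hG.notMem_pa i)

theorem Ancestral.pa_subset {S : Set (Fin d)} (hS : Ancestral E S) {j : Fin d} (hj : j ∈ S) :
    pa E j ⊆ S :=
  fun _ hx => hS j hj (Relation.TransGen.single hx)

theorem SupportMatches.support_rowFinsupp {B : Matrix (Fin d) (Fin d) ℝ}
    (hB : SupportMatches E B) (x : Fin d) : ↑(B.rowFinsupp x).support = barPa E x := by
  ext j
  simpa using hB x j

theorem span_rowFinsupp_eq_supported_barPa {K : ℕ} (hG : IsDAG E)
    {B : Fin K → Matrix (Fin d) (Fin d) ℝ} (hB : ∀ k, SupportMatches E (B k))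
    (hnd : NodeNonDegenerate E B) (i : Fin d) :
    Submodule.span ℝ (Set.range fun k => (B k).rowFinsupp i) = supported ℝ ℝ (barPa E i) := by
  refine Submodule.eq_of_le_of_finrank_le ?_ ?_
  · rw [Submodule.span_le, Set.range_subset_iff]
    intro k
    rw [SetLike.mem_coe, mem_supported, (hB k).support_rowFinsupp]
  · rw [finrank_supported, hG.ncard_barPa, ← hnd i]
    have hrows : Submodule.span ℝ (Set.range fun k => (B k).rowFinsupp i) =
        (Submodule.span ℝ (Set.range fun k => B k i)).map
          ((linearEquivFunOnFinite ℝ ℝ (Fin d)).symm : (Fin d → ℝ) →ₗ[ℝ] Fin d →₀ ℝ) := by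
      rw [Submodule.map_span, ← Set.range_comp]
      rfl
    rw [hrows, LinearEquiv.finrank_map_eq]

end Graph

section Prefix

variable {d m : ℕ}

theorem prefixSet_zero (s : Fin m → Fin d) : prefixSet s 0 = ∅ := by
  ext x; simp [prefixSet]

theorem prefixSet_succ (s : Fin m → Fin d) (j : Fin m) :
    prefixSet s (j + 1) = insert (s j) (prefixSet s j) := by
  ext x
  simp only [prefixSet, Set.mem_ofPred_eq, Set.mem_insert_iff, Nat.lt_succ_iff_lt_or_eq,
    or_and_right, exists_or, Fin.val_inj]
  rw [exists_eq_left]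
  exact or_comm.trans (or_congr_left eq_comm)

theorem notMem_prefixSet_self {s : Fin m → Fin d} (hinj : Function.Injective s) (j : Fin m) :
    s j ∉ prefixSet s j :=
  fun ⟨_, hlt, he⟩ => (hinj he ▸ hlt).false

end Prefix

theorem span_rowFinsupp_prefixSet {d m : ℕ} {E : Fin d → Fin d → Prop}
    {B : Matrix (Fin d) (Fin d) ℝ} (hB : SupportMatches E B) {s : Fin m → Fin d}
    (hanc : ∀ m' : ℕ, m' ≤ m → Ancestral E (prefixSet s m')) {m' : ℕ} (hm' : m' ≤ m) :
    Submodule.span ℝ (B.rowFinsupp '' prefixSet s m') = supported ℝ ℝ (prefixSet s m') := by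
  refine le_antisymm ?_ ?_
  · rw [Submodule.span_le, Set.image_subset_iff]
    intro x hx
    rw [Set.mem_preimage, SetLike.mem_coe, mem_supported, hB.support_rowFinsupp]
    exact Set.insert_subset hx ((hanc m' hm').pa_subset hx)
  · induction m' with
    | zero => simp [prefixSet_zero]
    | succ m' ih =>
      have hsucc := prefixSet_succ s ⟨m', hm'⟩
      have hpa : pa E (s ⟨m', hm'⟩) ⊆ prefixSet s (m' + 1) :=
        (hanc _ hm').pa_subset (hsucc ▸ Set.mem_insert _ _)
      rw [hsucc] at hpa ⊢
      refine supported_insert_le_span (ih (by omega)) ?_ ?_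
      · simpa using (hB _ _).mpr (Set.mem_insert _ _)
      · rw [hB.support_rowFinsupp]
        exact Set.insert_subset (Set.mem_insert _ _) hpa

theorem toE_mul_row {d n : ℕ} (B : Matrix (Fin d) (Fin d) ℝ) (H : Matrix (Fin d) (Fin n) ℝ)
    (x : Fin d) :
    toE ((B * H) x) = linearCombination ℝ (fun j => toE (H j)) (B.rowFinsupp x) := by
  rw [Matrix.rowFinsupp, linearCombination_eq_fintype_linearCombination_apply,
    Fintype.linearCombination_apply]
  ext a
  simp [toE, Matrix.mul_apply]

theorem linearIndependent_toE_row_of_rank_eq {d n : ℕ} {H : Matrix (Fin d) (Fin n) ℝ}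
    (hH : H.rank = d) : LinearIndependent ℝ (fun j => toE (H j)) := by
  have hrow : LinearIndependent ℝ H.row := by
    rw [linearIndependent_iff_card_eq_finrank_span, Set.finrank, ← Matrix.rank_eq_finrank_span_row,
      hH, Fintype.card_fin]
  exact hrow.map' (WithLp.linearEquiv 2 ℝ (Fin n → ℝ)).symm.toLinearMap (LinearEquiv.ker _)

theorem finrank_span_projPerp_rows {d n K m : ℕ} {E : Fin d → Fin d → Prop} (hG : IsDAG E)
    {H : Matrix (Fin d) (Fin n) ℝ} (hH : H.rank = d) {B : Fin K → Matrix (Fin d) (Fin d) ℝ}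
    (hB : ∀ k, SupportMatches E (B k)) (hnd : NodeNonDegenerate E B) {s : Fin m → Fin d}
    (hanc : ∀ m' : ℕ, m' ≤ m → Ancestral E (prefixSet s m')) (i : Fin d) {m' : ℕ}
    (hm' : m' ≤ m) :
    finrank ℝ (Submodule.span ℝ (Set.range fun k : Fin K =>
        projPerp (Submodule.span ℝ ((fun x => toE ((B k * H) x)) '' prefixSet s m'))
          (toE ((B k * H) i)))) = (barPa E i \ prefixSet s m').ncard := by
  set L := linearCombination ℝ (fun j => toE (H j))
  set W := (supported ℝ ℝ (prefixSet s m')).map L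
  have hW : ∀ k, Submodule.span ℝ ((fun x => toE ((B k * H) x)) '' prefixSet s m') = W := by
    intro k
    simp_rw [toE_mul_row]
    rw [← Set.image_image L, ← Submodule.map_span, span_rowFinsupp_prefixSet (hB k) hanc hm']
  set f := Wᗮ.starProjection.toLinearMap ∘ₗ L
  have hf : LinearMap.ker f = supported ℝ ℝ (prefixSet s m') := by
    rw [LinearMap.ker_comp, Submodule.ker_starProjection, Submodule.orthogonal_orthogonal,
      Submodule.comap_map_eq_of_injective (linearIndependent_toE_row_of_rank_eq hH)]
  have hproj : (Set.range fun k : Fin K =>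
      projPerp (Submodule.span ℝ ((fun x => toE ((B k * H) x)) '' prefixSet s m'))
        (toE ((B k * H) i))) = f '' Set.range fun k => (B k).rowFinsupp i := by
    rw [← Set.range_comp']
    refine congrArg Set.range (funext fun k => ?_)
    rw [hW k, toE_mul_row]
    rfl
  rw [hproj, ← Submodule.map_span, span_rowFinsupp_eq_supported_barPa hG hB hnd,
    finrank_map_supported_of_ker_eq hf]

theorem identify_parents_correct_general
    {d n K m : ℕ}
    (E : Fin d → Fin d → Prop) (hG : IsDAG E)
    (H : Matrix (Fin d) (Fin n) ℝ) (hH : H.rank = d)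
    (B : Fin K → Matrix (Fin d) (Fin d) ℝ)
    (hsupp : ∀ k, SupportMatches E (B k))
    (hnd : NodeNonDegenerate E B)
    (s : Fin m → Fin d) (hinj : Function.Injective s)
    (hanc : ∀ m' : ℕ, m' ≤ m → Ancestral E (prefixSet s m'))
    (i : Fin d) (hi : i ∉ Set.range s) (hpa : pa E i ⊆ Set.range s)
    (r : ℕ → ℕ)
    (hr : ∀ m' : ℕ, r m' = Module.finrank ℝ (Submodule.span ℝ (Set.range fun k : Fin K =>
        projPerp (Submodule.span ℝ ((fun x => toE ((B k * H) x)) '' prefixSet s m'))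
          (toE ((B k * H) i))))) :
    (∀ m' : ℕ, m' ≤ m → r m' = (barPa E i \ prefixSet s m').ncard) ∧
    (∀ j : Fin m, s j ∈ pa E i ↔ r ((j : ℕ) + 1) + 1 = r (j : ℕ)) ∧
    {x | ∃ j : Fin m, s j = x ∧ r ((j : ℕ) + 1) + 1 = r (j : ℕ)} = pa E i := by
  have hrank : ∀ m' : ℕ, m' ≤ m → r m' = (barPa E i \ prefixSet s m').ncard := fun m' hm' =>
    (hr m').trans (finrank_span_projPerp_rows hG hH hsupp hnd hanc i hm')
  have hdrop : ∀ j : Fin m, s j ∈ pa E i ↔ r ((j : ℕ) + 1) + 1 = r (j : ℕ) := by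
    intro j
    rw [hrank _ j.isLt, hrank _ j.isLt.le, prefixSet_succ,
      Set.ncard_sdiff_insert_add_one_iff (Set.toFinite _) (notMem_prefixSet_self hinj j), barPa,
      Set.mem_insert_iff, or_iff_right fun h => hi ⟨j, h⟩]
  refine ⟨hrank, hdrop, Set.ext fun x => ⟨?_, fun hx => ?_⟩⟩
  · rintro ⟨j, rfl, hj⟩
    exact (hdrop j).mpr hj
  · obtain ⟨j, rfl⟩ := hpa hx
    exact ⟨j, rfl, (hdrop j).mp hx⟩

/-- Correctness of parent identification (Proposition 5.2 and the dimension formula (*)):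
the ranks `r_{m'}` of the projected row families count the unexplained parents, a unit
drop in rank exactly identifies a parent, and the identified set equals `pa_G(i)`. -/
theorem identify_parents_correct
    {d n K m : ℕ} (hn : d ≤ n)
    (E : Fin d → Fin d → Prop) (hG : IsDAG E)
    (H : Matrix (Fin d) (Fin n) ℝ) (hH : H.rank = d)
    (B : Fin K → Matrix (Fin d) (Fin d) ℝ)
    (hsupp : ∀ k, SupportMatches E (B k))
    (hnd : NodeNonDegenerate E B)
    (s : Fin m → Fin d) (hinj : Function.Injective s)
    (hanc : ∀ m' : ℕ, m' ≤ m → Ancestral E (prefixSet s m'))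
    (i : Fin d) (hi : i ∉ Set.range s) (hpa : pa E i ⊆ Set.range s)
    (r : ℕ → ℕ)
    (hr : ∀ m' : ℕ, r m' = Module.finrank ℝ (Submodule.span ℝ (Set.range fun k : Fin K =>
        projPerp (Submodule.span ℝ ((fun x => toE ((B k * H) x)) '' prefixSet s m'))
          (toE ((B k * H) i))))) :
    (∀ m' : ℕ, m' ≤ m → r m' = (barPa E i \ prefixSet s m').ncard) ∧
    (∀ j : Fin m, s j ∈ pa E i ↔ r ((j : ℕ) + 1) + 1 = r (j : ℕ)) ∧
    {x | ∃ j : Fin m, s j = x ∧ r ((j : ℕ) + 1) + 1 = r (j : ℕ)} = pa E i :=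
  identify_parents_correct_general E hG H hH B hsupp hnd s hinj hanc i hi hpa r hr
end

section
/- Identifiability of non-parametric causal models from grouped single-node soft interventions (Theorem 7.1). Let G and Ĝ be DAGs on [d] and let τ : ℝ^d → ℝ^d be a C¹-diffeomorphism (τ = ĥ ∘ h^{−1} relating the latent variables of two candidate models, v = τ(z)). Let 𝔈 be a finite set of environments with a partition 𝔈 = ⋃_{i=1}^d 𝔈_i. For each E ∈ 𝔈, let p_E(z) = ∏_{i=1}^d p_i^E(z_i | z_{pa_G(i)}) and q_E(v) = ∏_{i=1}^d q_i^E(v_i | v_{pa_Ĝ(i)}) be probability densities on ℝ^d, continuously differentiable wherever positive, related by the change of variables p_E(z) = q_E(τ(z))·|det J_τ(z)| for all z (both models generate the same observation distribution in every environment). Assume: (i) all p_E (E ∈ 𝔈) have a common support O_z and all q_E a common support O_v; (ii) there exist permutations π and π′ of [d] such that for each i ∈ [d], any two distinct environments E₁, E₂ ∈ 𝔈_i satisfy p_j^{E₁} = p_j^{E₂} ⟺ j ≠ π(i) and q_j^{E₁} = q_j^{E₂} ⟺ j ≠ π′(i) (each group is a set of single-node soft interventions with unknown targets); (iii) there exist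 sets N_z ⊆ O_z and N_v ⊆ O_v with empty interior such that for every i ∈ [d], the family {p_{π(i)}^E : E ∈ 𝔈_i} is non-degenerate on node π(i) of G at every point of O_z ∖ N_z, and the family {q_{π′(i)}^E : E ∈ 𝔈_i} is non-degenerate on node π′(i) of Ĝ at every point of O_v ∖ N_v. Then there exists a permutation σ of [d] such that for all i, j ∈ [d], i ∈ pa_G(j) ⟺ σ(i) ∈ pa_Ĝ(σ(j)), and for every i ∈ [d], the component τ_{σ(i)} depends on O_z only on the coordinates z_j with j ∈ \bar{dom}_G(i) (i.e. ∂τ_{σ(i)}/∂z_j ≡ 0 on O_z for all j ∉ \bar{dom}_G(i)). -/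
/-!
Fix a group `𝔈ᵢ` and a base environment `e₀` in it. Since the factors of `e₀` and `e` agree off
the target, `p_{e₀}/p_e` is the ratio of the target conditionals, so it depends only on
`\bar{pa}_G(π i)`; by the change of variables (the Jacobian factor cancels) it also equals
`(q_{e₀}/q_e) ∘ τ`, where `q_{e₀}/q_e` depends only on `\bar{pa}_Ĝ(π' i)`. Differentiating along
`z_j` with `j ∉ \bar{pa}_G(π i)` and using non-degeneracy of the `q`-family gives
`∂τ_k/∂z_j = 0` for all `k ∈ \bar{pa}_Ĝ(π' i)`: first where `τ z ∉ N_v`, a dense set because `τ`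
is a homeomorphism, then on all of `O_z` by continuity of `Dτ`. The same argument applies to
`τ⁻¹`. At a point of the (nonempty) support, `Dτ` and `Dτ⁻¹` are mutually inverse matrices with
these sparsity patterns, and in a DAG this forces the entries `(π' i, π i)` to be nonzero; hence
`σ = π' ∘ π⁻¹` maps edges to edges in both directions. Finally, for `j ∉ \bar{dom}_G(i)` some
`c ∈ \bar{ch}_G(i)` has `j ∉ \bar{pa}_G(c)` while `σ i ∈ \bar{pa}_Ĝ(σ c)`, so the sparsity
pattern at node `c` kills `∂τ_{σ i}/∂z_j`.
-/

open Matrix MeasureTheory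

/-- A function `f : ℝ^d → ℝ` depends only on the coordinates in `S`. -/
def DependsOnlyOn {d : ℕ} (S : Set (Fin d)) (f : (Fin d → ℝ) → ℝ) : Prop :=
  ∀ z z' : Fin d → ℝ, (∀ j ∈ S, z j = z' j) → f z = f z'

/-- Non-degeneracy (Definition 7.1) of a family of conditional densities at node `i`
at the point `ẑ`, with distinguished base density `p e₀`: all densities are positive
at `ẑ`, and the matrix `[∂(p_{e₀}/p_e)/∂z_j]` (rows `e`, columns `j ∈ \bar{pa}_G(i)`)
has full column rank, i.e. its rows span all of `ℝ^{\bar{pa}_G(i)}`. -/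
def NonDegenerateAt {d : ℕ} {ι : Type*} (E : Fin d → Fin d → Prop) (i : Fin d)
    (p : ι → (Fin d → ℝ) → ℝ) (e₀ : ι) (zhat : Fin d → ℝ) : Prop :=
  (∀ e, 0 < p e zhat) ∧
  Submodule.span ℝ (Set.range fun e : ι =>
      fun j : barPa E i =>
        fderiv ℝ (fun z => p e₀ z / p e z) zhat (Pi.single (j : Fin d) 1)) = ⊤

open Set Filter Topology Function

section DependsOnlyOn

variable {d : ℕ} {S : Set (Fin d)} {f g : (Fin d → ℝ) → ℝ}

theorem DependsOnlyOn.div (hf : DependsOnlyOn S f) (hg : DependsOnlyOn S g) :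
    DependsOnlyOn S fun z => f z / g z := fun z z' h => by simp only [hf z z' h, hg z z' h]

theorem DependsOnlyOn.fderiv_apply_single_eq_zero (hf : DependsOnlyOn S f) {j : Fin d}
    (hj : j ∉ S) (z : Fin d → ℝ) : fderiv ℝ f z (Pi.single j 1) = 0 := by
  by_cases hdiff : DifferentiableAt ℝ f z
  · have hline : (fun t : ℝ => f (z + t • Pi.single j 1)) = fun _ => f z :=
      funext fun t => hf _ _ fun s hs => by simp [Pi.single_eq_of_ne (ne_of_mem_of_not_mem hs hj)]
    rw [← hdiff.lineDeriv_eq_fderiv, lineDeriv, hline, deriv_const]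
  · simp [fderiv_zero_of_not_differentiableAt hdiff]

theorem DependsOnlyOn.fderiv_apply_eq_sum [Fintype S] (hf : DependsOnlyOn S f)
    (z w : Fin d → ℝ) : fderiv ℝ f z w = ∑ k : S, fderiv ℝ f z (Pi.single k 1) * w k := by
  calc fderiv ℝ f z w = ∑ k, fderiv ℝ f z (Pi.single k 1) * w k := by
        conv_lhs => rw [← Finset.univ_sum_single w]
        refine (map_sum _ _ _).trans (Finset.sum_congr rfl fun k _ => ?_)
        rw [mul_comm, ← smul_eq_mul, ← map_smul, ← Pi.single_smul', smul_eq_mul, mul_one]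
    _ = ∑ k : S, fderiv ℝ f z (Pi.single k 1) * w k := by
        rw [Finset.sum_set_coe (f := fun k => fderiv ℝ f z (Pi.single k 1) * w k)]
        refine (Finset.sum_subset (Finset.subset_univ _) fun k _ hk => ?_).symm
        rw [hf.fderiv_apply_single_eq_zero (by simpa using hk), zero_mul]

end DependsOnlyOn

theorem eq_zero_of_dotProduct_eq_zero_of_span_eq_top {R n ι : Type*} [CommSemiring R]
    [Fintype n] [DecidableEq n] {v : ι → n → R} (hv : Submodule.span R (range v) = ⊤)
    {w : n → R} (hw : ∀ i, v i ⬝ᵥ w = 0) : w = 0 :=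
  (dotProductEquiv R n).map_eq_zero_iff.1 <|
    LinearMap.ext_on_range hv fun i => by simp [dotProduct_comm w, hw]

theorem exists_pos_of_integral_eq_one {α : Type*} [MeasurableSpace α] {μ : Measure α}
    {f : α → ℝ} (hf : ∫ x, f x ∂μ = 1) : ∃ x, 0 < f x := by
  by_contra! h
  linarith [integral_nonpos (μ := μ) h]

theorem isOpen_setOf_pos {X : Type*} [TopologicalSpace X] {f : X → ℝ}
    (hf : ∀ x, 0 < f x → ContinuousAt f x) : IsOpen {x | 0 < f x} :=
  isOpen_iff_mem_nhds.2 fun x hx => (hf x hx).preimage_mem_nhds (Ioi_mem_nhds hx)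

theorem factor_div_eq_div {κ α X : Type*} [Fintype α] {fac : κ → α → X → ℝ} {J : κ → X → ℝ}
    (hJ : ∀ e x, J e x = ∏ n, fac e n x) {m : α} {e₁ e₂ : κ} (h : ∀ n ≠ m, fac e₁ n = fac e₂ n)
    {x : X} (hx : J e₂ x ≠ 0) : fac e₁ m x / fac e₂ m x = J e₁ x / J e₂ x := by
  classical
  rw [hJ, Fintype.prod_eq_mul_prod_compl m] at hx
  rw [hJ, hJ, Fintype.prod_eq_mul_prod_compl m, Fintype.prod_eq_mul_prod_compl m,
    Finset.prod_congr rfl fun n hn => congrFun (h n (by simpa using hn)) x,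
    mul_div_mul_right _ _ (right_ne_zero_of_mul hx)]

theorem fderiv_comp_fderiv_of_leftInverse {𝕜 E F : Type*} [NontriviallyNormedField 𝕜]
    [NormedAddCommGroup E] [NormedSpace 𝕜 E] [NormedAddCommGroup F] [NormedSpace 𝕜 F]
    {f : E → F} {g : F → E} {x : E} (hg : DifferentiableAt 𝕜 g (f x))
    (hf : DifferentiableAt 𝕜 f x) (hgf : LeftInverse g f) :
    (fderiv 𝕜 g (f x) : F →ₗ[𝕜] E) ∘ₗ (fderiv 𝕜 f x : E →ₗ[𝕜] F) = LinearMap.id :=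
  congrArg ContinuousLinearMap.toLinearMap (by rw [← fderiv_comp x hg hf, hgf.comp_eq_id, fderiv_id] :
    (fderiv 𝕜 g (f x)).comp (fderiv 𝕜 f x) = .id 𝕜 E)

theorem det_fderiv_ne_zero_of_leftInverse {𝕜 E : Type*} [NontriviallyNormedField 𝕜]
    [NormedAddCommGroup E] [NormedSpace 𝕜 E] {f g : E → E} {x : E}
    (hg : DifferentiableAt 𝕜 g (f x)) (hf : DifferentiableAt 𝕜 f x) (hgf : LeftInverse g f) :
    LinearMap.det (fderiv 𝕜 f x : E →ₗ[𝕜] E) ≠ 0 :=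
  right_ne_zero_of_mul_eq_one (a := LinearMap.det (fderiv 𝕜 g (f x) : E →ₗ[𝕜] E)) <| by
    rw [← LinearMap.det_comp, fderiv_comp_fderiv_of_leftInverse hg hf hgf, LinearMap.det_id]

section JacobianSparsity

variable {d : ℕ} {κ : Type*} {τ τinv : (Fin d → ℝ) → (Fin d → ℝ)} {P Q : Set (Fin d)}
  {f g : κ → (Fin d → ℝ) → ℝ} {j k : Fin d}

theorem fderiv_apply_single_apply_eq_zero_of_span_eq_top {z : Fin d → ℝ}
    (hτ : DifferentiableAt ℝ τ z) (hfg : ∀ e, f e =ᶠ[𝓝 z] g e ∘ τ)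
    (hf : ∀ e, DependsOnlyOn P (f e)) (hg : ∀ e, DependsOnlyOn Q (g e))
    (hgd : ∀ e, DifferentiableAt ℝ (g e) (τ z))
    (hspan : Submodule.span ℝ (range fun e (k : Q) => fderiv ℝ (g e) (τ z) (Pi.single k 1)) = ⊤)
    (hj : j ∉ P) (hk : k ∈ Q) : fderiv ℝ τ z (Pi.single j 1) k = 0 := by
  have := Fintype.ofFinite Q
  set w := fderiv ℝ τ z (Pi.single j 1)
  have hchain : ∀ e, fderiv ℝ (g e) (τ z) w = 0 := fun e => by
    rw [← (hf e).fderiv_apply_single_eq_zero hj z, (hfg e).fderiv_eq, fderiv_comp z (hgd e) hτ]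
    rfl
  have hw : (fun k : Q => w k) = 0 :=
    eq_zero_of_dotProduct_eq_zero_of_span_eq_top hspan fun e => by
      rw [← hchain e, (hg e).fderiv_apply_eq_sum]
      rfl
  exact congrFun hw ⟨k, hk⟩

theorem fderiv_apply_single_apply_eq_zero_of_span_eq_top_of_interior_eq_empty (hτ : ContDiff ℝ 1 τ)
    (hτinv : Continuous τinv) (hleft : LeftInverse τinv τ) (hright : RightInverse τinv τ)
    {Oz Ov Nv : Set (Fin d → ℝ)} (hOz : IsOpen Oz) (hmaps : MapsTo τ Oz Ov)
    (hNv : interior Nv = ∅) (hfg : ∀ e, EqOn (f e) (g e ∘ τ) Oz)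
    (hf : ∀ e, DependsOnlyOn P (f e)) (hg : ∀ e, DependsOnlyOn Q (g e))
    (hgd : ∀ e, ∀ v ∈ Ov, DifferentiableAt ℝ (g e) v)
    (hspan : ∀ v ∈ Ov \ Nv,
      Submodule.span ℝ (range fun e (k : Q) => fderiv ℝ (g e) v (Pi.single k 1)) = ⊤)
    (hj : j ∉ P) (hk : k ∈ Q) {z : Fin d → ℝ} (hz : z ∈ Oz) :
    fderiv ℝ τ z (Pi.single j 1) k = 0 := by
  have hdense : Dense (τ ⁻¹' Nvᶜ) := by
    rw [← image_eq_preimage_of_inverse hright hleft]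
    exact hleft.surjective.denseRange.dense_image hτinv (interior_eq_empty_iff_dense_compl.1 hNv)
  have hcont : Continuous fun z => fderiv ℝ τ z (Pi.single j 1) k := by
    have := hτ.continuous_fderiv one_ne_zero
    fun_prop
  refine EqOn.of_subset_closure (fun z hz => ?_) hcont.continuousOn continuousOn_const
    inter_subset_left (hdense.open_subset_closure_inter hOz) hz
  exact fderiv_apply_single_apply_eq_zero_of_span_eq_top (hτ.differentiable one_ne_zero z)
    (fun e => eventuallyEq_of_mem (hOz.mem_nhds hz.1) (hfg e)) hf hg
    (fun e => hgd e _ (hmaps hz.1)) (hspan _ ⟨hmaps hz.1, hz.2⟩) hj hk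

end JacobianSparsity

section Graph

variable {d : ℕ} {E Ehat : Fin d → Fin d → Prop}

theorem IsDAG.irrefl (hE : IsDAG E) (i : Fin d) : ¬ E i i := fun h => hE i (.single h)

theorem IsDAG.exists_mem_barCh_notMem_barPa (hE : IsDAG E) {i j : Fin d}
    (hj : j ∉ barDom E i) : ∃ c ∈ barCh E i, j ∉ barPa E c := by
  by_cases hji : j ∈ pa E i
  · obtain ⟨c, hic, hjc⟩ := not_subset.1 fun h => hj (mem_insert_of_mem _ ⟨hji, h⟩)
    refine ⟨c, mem_insert_of_mem _ hic, ?_⟩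
    rintro (rfl | hjc')
    · exact hE j (.tail (.single hji) hic)
    · exact hjc hjc'
  · refine ⟨i, mem_insert _ _, ?_⟩
    rintro (rfl | h)
    · exact hj (mem_insert _ _)
    · exact hji h

theorem IsDAG.apply_self_ne_zero {K : Type*} [Field K] (hE : IsDAG E)
    {r : Fin d → Fin d → K} (hr : LinearIndependent K r)
    (hsupp : ∀ s j, r s j ≠ 0 → j ∈ barPa E s) (m : Fin d) : r m m ≠ 0 := by
  classical
  intro hm
  set S := (ans E m).toFinset
  have hS : ∀ x, x ∈ S ↔ Relation.TransGen E x m := fun x => Set.mem_toFinset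
  have hmS : m ∉ S := fun h => hE m ((hS m).1 h)
  -- if `r m m = 0`, the `|S| + 1` vectors `r s`, `s ∈ {m} ∪ S`, all live on the coordinates `S`
  have hsuppS : ∀ s ∈ insert m S, ∀ j ∉ S, r s j = 0 := by
    intro s hs j hj
    by_contra hsj
    rcases Finset.mem_insert.1 hs, hsupp s j hsj with ⟨rfl | hs, rfl | hjs⟩
    · exact hsj hm
    · exact hj ((hS j).2 (.single hjs))
    · exact hj hs
    · exact hj ((hS j).2 (.head hjs ((hS s).1 hs)))
  have hli : LinearIndependent K fun s : (insert m S : Finset (Fin d)) => fun j : S => r s j := by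
    refine Fintype.linearIndependent_iff.2 fun a ha => ?_
    refine Fintype.linearIndependent_iff.1 (hr.comp _ Subtype.val_injective) a (funext fun j => ?_)
    by_cases hj : j ∈ S
    · simpa using congrFun ha ⟨j, hj⟩
    · simp [Finset.sum_apply, hsuppS _ (Subtype.prop _) j hj]
  have hcard := hli.fintype_card_le_finrank
  simp only [Module.finrank_fintype_fun_eq_card, Fintype.card_coe,
    Finset.card_insert_of_notMem hmS] at hcard
  omega

theorem IsDAG.mem_pa_of_sparse {K : Type*} [Field K] (hE : IsDAG E) (hEhat : IsDAG Ehat)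
    {M : Matrix (Fin d) (Fin d) K} (hM : LinearIndependent K M.row) {ρ : Equiv.Perm (Fin d)}
    (hA : ∀ m, ∀ j ∉ barPa E m, ∀ k ∈ barPa Ehat (ρ m), M k j = 0) {i c : Fin d}
    (h : ρ i ∈ pa Ehat (ρ c)) : i ∈ pa E c := by
  have hdiag : M (ρ i) i ≠ 0 :=
    hE.apply_self_ne_zero (r := fun s => M (ρ s)) (hM.comp ρ ρ.injective)
      (fun s j hs => by_contra fun hj => hs (hA s j hj (ρ s) (mem_insert _ _))) i
  obtain rfl | hi : i ∈ barPa E c :=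
    by_contra fun hi => hdiag (hA c i hi (ρ i) (mem_insert_of_mem _ h))
  · exact absurd h (hEhat.irrefl _)
  · exact hi

theorem IsDAG.mem_pa_iff_of_sparse {K : Type*} [Field K] (hE : IsDAG E) (hEhat : IsDAG Ehat)
    {A B : (Fin d → K) →ₗ[K] (Fin d → K)} (hBA : B ∘ₗ A = LinearMap.id) {ρ : Equiv.Perm (Fin d)}
    (hA : ∀ m, ∀ j ∉ barPa E m, ∀ k ∈ barPa Ehat (ρ m), A (Pi.single j 1) k = 0)
    (hB : ∀ m, ∀ j ∉ barPa Ehat m, ∀ k ∈ barPa E (ρ.symm m), B (Pi.single j 1) k = 0)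
    (i c : Fin d) :
    i ∈ pa E c ↔ ρ i ∈ pa Ehat (ρ c) := by
  have hNM : LinearMap.toMatrix' B * LinearMap.toMatrix' A = 1 := by
    rw [← LinearMap.toMatrix'_comp, hBA, LinearMap.toMatrix'_id]
  refine ⟨fun h => ?_, hE.mem_pa_of_sparse hEhat
    (Matrix.linearIndependent_rows_of_isUnit (.of_mul_eq_one_right _ hNM))
    (fun m j hj k hk => by rw [LinearMap.toMatrix'_apply]; exact hA m j hj k hk)⟩
  exact hEhat.mem_pa_of_sparse (ρ := ρ.symm) hE
    (Matrix.linearIndependent_rows_of_isUnit (.of_mul_eq_one _ hNM))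
    (fun m j hj k hk => by rw [LinearMap.toMatrix'_apply]; exact hB m j hj k hk) (by simpa using h)

theorem IsDAG.apply_eq_zero_of_notMem_barDom {α : Type*} [Zero α] (hE : IsDAG E)
    {ρ : Equiv.Perm (Fin d)} (hiso : ∀ i c, i ∈ pa E c ↔ ρ i ∈ pa Ehat (ρ c))
    {A : Fin d → Fin d → α} (hA : ∀ m, ∀ j ∉ barPa E m, ∀ k ∈ barPa Ehat (ρ m), A k j = 0)
    {i j : Fin d} (hj : j ∉ barDom E i) : A (ρ i) j = 0 := by
  obtain ⟨c, hc, hjc⟩ := hE.exists_mem_barCh_notMem_barPa hj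
  refine hA c j hjc (ρ i) ?_
  rcases hc with rfl | hic
  · exact mem_insert _ _
  · exact mem_insert_of_mem _ ((hiso i c).1 hic)

end Graph

theorem fderiv_apply_single_apply_eq_zero_of_interventions {d : ℕ} {ι : Type*}
    {E Ehat : Fin d → Fin d → Prop} {τ τinv : (Fin d → ℝ) → (Fin d → ℝ)}
    (hτ : ContDiff ℝ 1 τ) (hτinv : Continuous τinv)
    (hleft : LeftInverse τinv τ) (hright : RightInverse τinv τ)
    {part : ι → Fin d} {pfac qfac : ι → Fin d → (Fin d → ℝ) → ℝ} {pJ qJ : ι → (Fin d → ℝ) → ℝ}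
    (hpdep : ∀ e i, DependsOnlyOn (barPa E i) (pfac e i))
    (hqdep : ∀ e i, DependsOnlyOn (barPa Ehat i) (qfac e i))
    (hpJ : ∀ e z, pJ e z = ∏ n, pfac e n z) (hqJ : ∀ e v, qJ e v = ∏ n, qfac e n v)
    {π π' : Equiv.Perm (Fin d)}
    (hp_off : ∀ i e₁ e₂, part e₁ = i → part e₂ = i → e₁ ≠ e₂ → ∀ n ≠ π i, pfac e₁ n = pfac e₂ n)
    (hq_off : ∀ i e₁ e₂, part e₁ = i → part e₂ = i → e₁ ≠ e₂ → ∀ n ≠ π' i, qfac e₁ n = qfac e₂ n)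
    (hratio : ∀ e₁ e₂ z, pJ e₁ z / pJ e₂ z = qJ e₁ (τ z) / qJ e₂ (τ z))
    {Oz Ov Nv : Set (Fin d → ℝ)}
    (hOz : ∀ e, {z | 0 < pJ e z} = Oz) (hOv : ∀ e, {v | 0 < qJ e v} = Ov)
    (hqC1 : ∀ e v, 0 < qJ e v → ContDiffAt ℝ 1 (qJ e) v) (hOzv : Oz = τ ⁻¹' Ov)
    (hNv : interior Nv = ∅)
    (hnd : ∀ i, ∃ e₀ : {e // part e = i}, ∀ v ∈ Ov \ Nv,
      NonDegenerateAt Ehat (π' i) (fun e : {e // part e = i} => qfac e.1 (π' i)) e₀ v) :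
    ∀ z ∈ Oz, ∀ m, ∀ j ∉ barPa E m, ∀ k ∈ barPa Ehat ((π.symm.trans π') m),
      fderiv ℝ τ z (Pi.single j 1) k = 0 := by
  intro z hz m j hj k hk
  obtain ⟨i, rfl⟩ := π.surjective m
  obtain ⟨e₀, hnd⟩ := hnd i
  have hpos_p : ∀ e, ∀ z ∈ Oz, 0 < pJ e z := fun e z hz => by rwa [← hOz e] at hz
  have hpos_q : ∀ e, ∀ v ∈ Ov, 0 < qJ e v := fun e v hv => by rwa [← hOv e] at hv
  have hOv_open : IsOpen Ov :=
    hOv e₀ ▸ isOpen_setOf_pos fun v hv => (hqC1 e₀ v hv).continuousAt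
  have hp_ratio : ∀ e : {e // part e = i}, ∀ z ∈ Oz,
      pfac e₀ (π i) z / pfac e (π i) z = pJ e₀ z / pJ e z := fun e z hz => by
    refine factor_div_eq_div hpJ (fun n hn => ?_) (hpos_p e z hz).ne'
    obtain h | h := eq_or_ne e₀ e
    · rw [h]
    · exact hp_off i e₀ e e₀.2 e.2 (Subtype.coe_injective.ne h) n hn
  have hq_ratio : ∀ e : {e // part e = i}, EqOn (fun v => qfac e₀ (π' i) v / qfac e (π' i) v)
      (fun v => qJ e₀ v / qJ e v) Ov := fun e v hv => by
    refine factor_div_eq_div hqJ (fun n hn => ?_) (hpos_q e v hv).ne'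
    obtain h | h := eq_or_ne e₀ e
    · rw [h]
    · exact hq_off i e₀ e e₀.2 e.2 (Subtype.coe_injective.ne h) n hn
  refine fderiv_apply_single_apply_eq_zero_of_span_eq_top_of_interior_eq_empty hτ hτinv hleft hright
    (hOzv ▸ hOv_open.preimage hτ.continuous) (hOzv ▸ mapsTo_preimage τ Ov) hNv
    (f := fun (e : {e // part e = i}) z => pfac e₀ (π i) z / pfac e (π i) z) (fun e z hz => ?_)
    (fun e => (hpdep e₀ _).div (hpdep e _)) (fun e => (hqdep e₀ _).div (hqdep e _))
    (fun e v hv => ?_) (fun v hv => (hnd v hv).2) (by simpa using hj) (by simpa using hk) hz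
  · exact (hp_ratio e z hz).trans ((hratio _ _ z).trans (hq_ratio e (hOzv.subset hz)).symm)
  · exact (((hqC1 e₀ v (hpos_q e₀ v hv)).div (hqC1 e v (hpos_q e v hv))
      (hpos_q e v hv).ne').differentiableAt one_ne_zero).congr_of_eventuallyEq
      (eventuallyEq_of_mem (hOv_open.mem_nhds hv) (hq_ratio e))

theorem nonparametric_identifiability_general
    {d : ℕ} {ι : Type*}
    (E Ehat : Fin d → Fin d → Prop) (hG : IsDAG E) (hGhat : IsDAG Ehat)
    -- the C¹-diffeomorphism `τ = ĥ ∘ h⁻¹` relating the two latent representations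
    (τ τinv : (Fin d → ℝ) → (Fin d → ℝ))
    (hτ : ContDiff ℝ 1 τ) (hτinv : ContDiff ℝ 1 τinv)
    (hleft : Function.LeftInverse τinv τ) (hright : Function.RightInverse τinv τ)
    -- environments and the partition `𝔈 = ⋃ᵢ 𝔈ᵢ`, encoded by `part`
    (part : ι → Fin d)
    -- conditional factors and joint densities of the two models
    (pfac qfac : ι → Fin d → (Fin d → ℝ) → ℝ)
    (hpdep : ∀ e i, DependsOnlyOn (barPa E i) (pfac e i))
    (hqdep : ∀ e i, DependsOnlyOn (barPa Ehat i) (qfac e i))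
    (pJ qJ : ι → (Fin d → ℝ) → ℝ)
    (hpJ : ∀ e z, pJ e z = ∏ i, pfac e i z)
    (hqJ : ∀ e v, qJ e v = ∏ i, qfac e i v)
    (hpprob : ∀ e, ∫ z : Fin d → ℝ, pJ e z = 1)
    (hpC1 : ∀ e z, 0 < pJ e z → ContDiffAt ℝ 1 (pJ e) z)
    (hqC1 : ∀ e v, 0 < qJ e v → ContDiffAt ℝ 1 (qJ e) v)
    -- both models generate the same observation distribution: change of variables
    (hchange : ∀ e z, pJ e z = qJ e (τ z) * |((fderiv ℝ τ z).toLinearMap).det|)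
    -- (i) common supports
    (Oz Ov : Set (Fin d → ℝ))
    (hOz : ∀ e, {z | 0 < pJ e z} = Oz)
    (hOv : ∀ e, {v | 0 < qJ e v} = Ov)
    -- (ii) each group is a set of single-node soft interventions with unknown targets
    (π π' : Equiv.Perm (Fin d))
    (hint_p : ∀ i : Fin d, ∀ e₁ e₂ : ι, part e₁ = i → part e₂ = i → e₁ ≠ e₂ →
        ∀ j, (pfac e₁ j = pfac e₂ j ↔ j ≠ π i))
    (hint_q : ∀ i : Fin d, ∀ e₁ e₂ : ι, part e₁ = i → part e₂ = i → e₁ ≠ e₂ →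
        ∀ j, (qfac e₁ j = qfac e₂ j ↔ j ≠ π' i))
    -- (iii) non-degeneracy outside exceptional sets with empty interior
    (Nz Nv : Set (Fin d → ℝ))
    (hNzint : interior Nz = ∅) (hNvint : interior Nv = ∅)
    (hndp : ∀ i : Fin d, ∃ e₀ : {e : ι // part e = i}, ∀ z ∈ Oz \ Nz,
        NonDegenerateAt E (π i) (fun e : {e : ι // part e = i} => pfac e.1 (π i)) e₀ z)
    (hndq : ∀ i : Fin d, ∃ e₀ : {e : ι // part e = i}, ∀ v ∈ Ov \ Nv,
        NonDegenerateAt Ehat (π' i) (fun e : {e : ι // part e = i} => qfac e.1 (π' i)) e₀ v) :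
    ∃ σ : Equiv.Perm (Fin d),
      (∀ i j, i ∈ pa E j ↔ σ i ∈ pa Ehat (σ j)) ∧
      ∀ i j, j ∉ barDom E i → ∀ z ∈ Oz,
        fderiv ℝ (fun w => τ w (σ i)) z (Pi.single j 1) = 0 := by
  rcases isEmpty_or_nonempty (Fin d) with hd | hd
  · exact ⟨1, fun i => isEmptyElim i, fun i => isEmptyElim i⟩
  obtain ⟨⟨e, -⟩, -⟩ := hndp (Classical.arbitrary _)
  have hτd := hτ.differentiable one_ne_zero
  have hτinvd := hτinv.differentiable one_ne_zero
  have hdet : ∀ z, LinearMap.det (fderiv ℝ τ z : (Fin d → ℝ) →ₗ[ℝ] (Fin d → ℝ)) ≠ 0 := fun z =>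
    det_fderiv_ne_zero_of_leftInverse (hτinvd _) (hτd z) hleft
  have hratio : ∀ e₁ e₂ z, pJ e₁ z / pJ e₂ z = qJ e₁ (τ z) / qJ e₂ (τ z) := fun e₁ e₂ z => by
    rw [hchange, hchange, mul_div_mul_right _ _ (abs_ne_zero.2 (hdet z))]
  have hOzv : Oz = τ ⁻¹' Ov := by
    ext z
    rw [← hOz e, ← hOv e]
    show 0 < pJ e z ↔ 0 < qJ e (τ z)
    rw [hchange, mul_pos_iff_of_pos_right (abs_pos.2 (hdet z))]
  have hp_off : ∀ i e₁ e₂, part e₁ = i → part e₂ = i → e₁ ≠ e₂ → ∀ n ≠ π i, pfac e₁ n = pfac e₂ n :=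
    fun i e₁ e₂ h₁ h₂ hne n => (hint_p i e₁ e₂ h₁ h₂ hne n).2
  have hq_off : ∀ i e₁ e₂, part e₁ = i → part e₂ = i → e₁ ≠ e₂ → ∀ n ≠ π' i, qfac e₁ n = qfac e₂ n :=
    fun i e₁ e₂ h₁ h₂ hne n => (hint_q i e₁ e₂ h₁ h₂ hne n).2
  have hA := fderiv_apply_single_apply_eq_zero_of_interventions hτ hτinv.continuous hleft hright
    hpdep hqdep hpJ hqJ hp_off hq_off hratio hOz hOv hqC1 hOzv hNvint hndq
  have hB := fderiv_apply_single_apply_eq_zero_of_interventions hτinv hτ.continuous hright hleft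
    hqdep hpdep hqJ hpJ hq_off hp_off (fun e₁ e₂ v => by rw [hratio, hright]) hOv hOz hpC1
    (by rw [hOzv, ← preimage_comp, hright.comp_eq_id, preimage_id]) hNzint hndp
  obtain ⟨z₀, hz₀⟩ : Oz.Nonempty := hOz e ▸ exists_pos_of_integral_eq_one (hpprob e)
  have hiso := hG.mem_pa_iff_of_sparse hGhat (fderiv_comp_fderiv_of_leftInverse (hτinvd _) (hτd z₀)
    hleft) (hA z₀ hz₀) (hB _ (hOzv.subset hz₀))
  refine ⟨_, hiso, fun i j hj z hz => ?_⟩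
  rw [fderiv_apply (hτd z)]
  exact hG.apply_eq_zero_of_notMem_barDom (A := fun k j => fderiv ℝ τ z (Pi.single j 1) k)
    hiso (hA z hz) hj

/-- Identifiability of non-parametric causal models from grouped single-node soft
interventions (Theorem 7.1). -/
theorem nonparametric_identifiability
    {d : ℕ} {ι : Type*} [Fintype ι]
    (E Ehat : Fin d → Fin d → Prop) (hG : IsDAG E) (hGhat : IsDAG Ehat)
    -- the C¹-diffeomorphism `τ = ĥ ∘ h⁻¹` relating the two latent representations
    (τ τinv : (Fin d → ℝ) → (Fin d → ℝ))
    (hτ : ContDiff ℝ 1 τ) (hτinv : ContDiff ℝ 1 τinv)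
    (hleft : Function.LeftInverse τinv τ) (hright : Function.RightInverse τinv τ)
    -- environments and the partition `𝔈 = ⋃ᵢ 𝔈ᵢ`, encoded by `part`
    (part : ι → Fin d)
    -- conditional factors and joint densities of the two models
    (pfac qfac : ι → Fin d → (Fin d → ℝ) → ℝ)
    (hpdep : ∀ e i, DependsOnlyOn (barPa E i) (pfac e i))
    (hqdep : ∀ e i, DependsOnlyOn (barPa Ehat i) (qfac e i))
    (pJ qJ : ι → (Fin d → ℝ) → ℝ)
    (hpJ : ∀ e z, pJ e z = ∏ i, pfac e i z)
    (hqJ : ∀ e v, qJ e v = ∏ i, qfac e i v)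
    (hpnonneg : ∀ e i z, 0 ≤ pfac e i z)
    (hqnonneg : ∀ e i v, 0 ≤ qfac e i v)
    (hpprob : ∀ e, ∫ z : Fin d → ℝ, pJ e z = 1)
    (hqprob : ∀ e, ∫ v : Fin d → ℝ, qJ e v = 1)
    (hpC1 : ∀ e z, 0 < pJ e z → ContDiffAt ℝ 1 (pJ e) z)
    (hqC1 : ∀ e v, 0 < qJ e v → ContDiffAt ℝ 1 (qJ e) v)
    -- both models generate the same observation distribution: change of variables
    (hchange : ∀ e z, pJ e z = qJ e (τ z) * |((fderiv ℝ τ z).toLinearMap).det|)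
    -- (i) common supports
    (Oz Ov : Set (Fin d → ℝ))
    (hOz : ∀ e, {z | 0 < pJ e z} = Oz)
    (hOv : ∀ e, {v | 0 < qJ e v} = Ov)
    -- (ii) each group is a set of single-node soft interventions with unknown targets
    (π π' : Equiv.Perm (Fin d))
    (hint_p : ∀ i : Fin d, ∀ e₁ e₂ : ι, part e₁ = i → part e₂ = i → e₁ ≠ e₂ →
        ∀ j, (pfac e₁ j = pfac e₂ j ↔ j ≠ π i))
    (hint_q : ∀ i : Fin d, ∀ e₁ e₂ : ι, part e₁ = i → part e₂ = i → e₁ ≠ e₂ →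
        ∀ j, (qfac e₁ j = qfac e₂ j ↔ j ≠ π' i))
    -- (iii) non-degeneracy outside exceptional sets with empty interior
    (Nz Nv : Set (Fin d → ℝ))
    (hNz : Nz ⊆ Oz) (hNv : Nv ⊆ Ov)
    (hNzint : interior Nz = ∅) (hNvint : interior Nv = ∅)
    (hndp : ∀ i : Fin d, ∃ e₀ : {e : ι // part e = i}, ∀ z ∈ Oz \ Nz,
        NonDegenerateAt E (π i) (fun e : {e : ι // part e = i} => pfac e.1 (π i)) e₀ z)
    (hndq : ∀ i : Fin d, ∃ e₀ : {e : ι // part e = i}, ∀ v ∈ Ov \ Nv,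
        NonDegenerateAt Ehat (π' i) (fun e : {e : ι // part e = i} => qfac e.1 (π' i)) e₀ v) :
    ∃ σ : Equiv.Perm (Fin d),
      (∀ i j, i ∈ pa E j ↔ σ i ∈ pa Ehat (σ j)) ∧
      ∀ i j, j ∉ barDom E i → ∀ z ∈ Oz,
        fderiv ℝ (fun w => τ w (σ i)) z (Pi.single j 1) = 0 :=
  nonparametric_identifiability_general E Ehat hG hGhat τ τinv hτ hτinv hleft hright part pfac qfac
    hpdep hqdep pJ qJ hpJ hqJ hpprob hpC1 hqC1 hchange Oz Ov hOz hOv π π' hint_p hint_q Nz Nv hNzint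
    hNvint hndp hndq
end

section
/- Effect-domination ambiguity is unavoidable for non-parametric models (Theorem 8.2). Let G be a DAG on [d] and 𝔈 a finite set of environments with a partition 𝔈 = ⋃_{i=1}^d 𝔈_i. Suppose given, for each E ∈ 𝔈, a probability density p_E(z) = ∏_{i=1}^d p_i^E(z_i | z_{pa_G(i)}) on ℝ^d such that: (i) all factors p_i^E are continuously differentiable and p_E is positive everywhere; (ii) each group 𝔈_i is a set of single-node soft interventions on node i: for any two distinct E₁, E₂ ∈ 𝔈_i and any j ∈ [d], p_j^{E₁} = p_j^{E₂} if and only if j ≠ i; (iii) for each i ∈ [d], the family {p_i^E : E ∈ 𝔈_i} is non-degenerate on node i at every point ẑ ∈ ℝ^d. Then there exists a diffeomorphism m : ℝ^d → ℝ^d such that the densities q_E of v = m(z), determined by q_E(m(z))·|det J_m(z)| = p_E(z), satisfy: (i′) each q_E factorizes over the SAME graph G as q_E(v) = ∏_{i=1}^d q_i^E(v_i | v_{pa_G(i)}) with all factors continuously differentiable and q_E positive everywhere; (ii′) for the same partition, each 𝔈_i is a set of single-node soft interventions on node i for the q-model; (iii′) for each i, {q_i^E : E ∈ 𝔈_i}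 is non-degenerate on node i at every point of ℝ^d; and yet (iv) for every i ∈ [d] and every j ∈ \bar{dom}_G(i), the partial derivative ∂m_i/∂z_j is nonzero (at every point of ℝ^d). -/
open Matrix MeasureTheory

/-!
The witness is the linear map `m z = L z`, where `L` is the indicator matrix of
`j ∈ \bar{dom}_G(i)`, so that `∂m_i/∂z_j = 1` there, and the new factors are `q_i^E = p_i^E ∘ L⁻¹`.
Since `j ∈ dom_G(k)` and `k ∈ \bar{pa}_G(i)` force `j ∈ \bar{pa}_G(i)`, every set `\bar{pa}_G(i)`
is invariant under `L` and `L⁻¹`: the `\bar{pa}_G(i)`-coordinates of `L⁻¹ v` only depend on those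
of `v`, so `q_i^E` again factorizes over `G`, and the gradients of the density ratios on
`\bar{pa}_G(i)` are transformed by the invertible diagonal block of `L⁻¹`, which preserves
non-degeneracy. Along a topological order `L` is unitriangular, so `det L = 1`.
-/

namespace Matrix

variable {m n R : Type*}

theorem blockTriangular_mem_iff [Zero R] {M : Matrix m m R} {S : Set m} :
    M.BlockTriangular (· ∈ S) ↔ ∀ i ∈ S, ∀ j ∉ S, M i j = 0 := by
  refine ⟨fun hM i hi j hj => hM (lt_of_le_not_ge (fun h => absurd h hj) fun h => hj (h hi)),
    fun hM i j hij => hM i ?_ j ?_⟩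
  · by_contra hi
    exact hij.not_ge fun h => absurd h hi
  · exact fun hj => hij.not_ge fun _ => hj

theorem BlockTriangular.isUnit_toBlock [Fintype m] [DecidableEq m] [CommRing R]
    {M : Matrix m m R} {S : Set m} [DecidablePred (· ∈ S)]
    (hM : M.BlockTriangular (· ∈ S)) (hunit : IsUnit M) :
    IsUnit (M.toBlock (· ∈ S) (· ∈ S)) := by
  rw [isUnit_iff_isUnit_det] at hunit ⊢
  rw [twoBlockTriangular_det' M (· ∈ S) (blockTriangular_mem_iff.1 hM)] at hunit
  exact isUnit_of_mul_isUnit_left hunit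

theorem span_range_vecMul_eq_top [Fintype n] [DecidableEq n] [CommRing R] {κ : Type*}
    {V : κ → n → R} (hV : Submodule.span R (Set.range V) = ⊤) {A : Matrix n n R}
    (hA : IsUnit A) : Submodule.span R (Set.range fun e => V e ᵥ* A) = ⊤ := by
  rw [show (fun e => V e ᵥ* A) = A.vecMulLinear ∘ V from rfl, Set.range_comp,
    Submodule.span_image, hV, Submodule.map_top, LinearMap.range_eq_top]
  exact vecMul_surjective_iff_isUnit.2 hA

end Matrix

section MulVecCalculus

variable {𝕜 : Type*} [NontriviallyNormedField 𝕜] [CompleteSpace 𝕜] {n : Type*} [Fintype n]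
  [DecidableEq n] (M : Matrix n n 𝕜)

theorem hasFDerivAt_mulVec (v : n → 𝕜) :
    HasFDerivAt (fun w => M *ᵥ w) (LinearMap.toContinuousLinearMap (toLin' M)) v :=
  (LinearMap.toContinuousLinearMap (toLin' M)).hasFDerivAt

theorem contDiff_mulVec {k : WithTop ℕ∞} : ContDiff 𝕜 k fun w => M *ᵥ w :=
  (LinearMap.toContinuousLinearMap (toLin' M)).contDiff

theorem det_fderiv_mulVec (v : n → 𝕜) :
    (fderiv 𝕜 (fun w => M *ᵥ w) v).toLinearMap.det = M.det := by
  rw [(hasFDerivAt_mulVec M v).fderiv]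
  exact LinearMap.det_toLin' M

theorem fderiv_mulVec_apply_single (v : n → 𝕜) (i j : n) :
    fderiv 𝕜 (fun w => (M *ᵥ w) i) v (Pi.single j 1) = M i j := by
  have h : HasFDerivAt (fun w => (M *ᵥ w) i)
      ((ContinuousLinearMap.proj i).comp (LinearMap.toContinuousLinearMap (toLin' M))) v :=
    (ContinuousLinearMap.proj (R := 𝕜) (φ := fun _ : n => 𝕜) i).hasFDerivAt.comp v
      (hasFDerivAt_mulVec M v)
  simp [h.fderiv]

end MulVecCalculus

section DependsOnlyOn

variable {d : ℕ} {S : Set (Fin d)} {f : (Fin d → ℝ) → ℝ}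

theorem DependsOnlyOn.comp_mulVec (hf : DependsOnlyOn S f) {M : Matrix (Fin d) (Fin d) ℝ}
    (hM : M.BlockTriangular (· ∈ S)) : DependsOnlyOn S fun v => f (M *ᵥ v) := by
  refine fun z z' hzz' => hf _ _ fun k hk => ?_
  simp only [mulVec, dotProduct]
  refine Finset.sum_congr rfl fun j _ => ?_
  by_cases hj : j ∈ S
  · rw [hzz' j hj]
  · rw [Matrix.blockTriangular_mem_iff.1 hM k hk j hj, zero_mul, zero_mul]

theorem DependsOnlyOn.fderiv_single_eq_zero (hf : DependsOnlyOn S f) {z : Fin d → ℝ}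
    (hd : DifferentiableAt ℝ f z) {k : Fin d} (hk : k ∉ S) :
    fderiv ℝ f z (Pi.single k 1) = 0 := by
  have hline : (fun t : ℝ => f (z + t • Pi.single k 1)) = fun _ => f z :=
    funext fun t => hf _ _ fun j hj => by simp [ne_of_mem_of_not_mem hj hk]
  rw [← hd.lineDeriv_eq_fderiv, lineDeriv, hline, deriv_const]

theorem DependsOnlyOn.fderiv_comp_mulVec_single [DecidablePred (· ∈ S)] (hf : DependsOnlyOn S f)
    {M : Matrix (Fin d) (Fin d) ℝ} {v : Fin d → ℝ} (hd : DifferentiableAt ℝ f (M *ᵥ v)) (j : S) :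
    fderiv ℝ (fun w => f (M *ᵥ w)) v (Pi.single j 1) =
      ((fun k : S => fderiv ℝ f (M *ᵥ v) (Pi.single k 1)) ᵥ* M.toBlock (· ∈ S) (· ∈ S)) j := by
  set D := fderiv ℝ f (M *ᵥ v)
  have hcol : M *ᵥ Pi.single j 1 = ∑ k, M k j • Pi.single k 1 := by
    ext l
    simp [Finset.sum_apply, Pi.single_apply]
  have houtside : ∀ k ∉ S, M k j * D (Pi.single k 1) = 0 := fun k hk => by
    rw [hf.fderiv_single_eq_zero hd hk, mul_zero]
  have hchain : HasFDerivAt (fun w => f (M *ᵥ w))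
      (D.comp (LinearMap.toContinuousLinearMap (toLin' M))) v :=
    hd.hasFDerivAt.comp v (hasFDerivAt_mulVec M v)
  rw [hchain.fderiv]
  change D (M *ᵥ Pi.single j 1) = _
  rw [hcol, map_sum, Matrix.vecMul, dotProduct]
  simp only [map_smul, smul_eq_mul, Matrix.toBlock_apply]
  rw [← Finset.sum_filter_of_ne fun k _ hk => by_contra fun hkS => hk (houtside k hkS),
    Finset.sum_subtype (p := (· ∈ S)) _ fun k => by simp]
  exact Finset.sum_congr rfl fun k _ => mul_comm _ _

end DependsOnlyOn

theorem NonDegenerateAt.comp_mulVec {d : ℕ} {ι : Type*} {E : Fin d → Fin d → Prop} {i : Fin d}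
    {p : ι → (Fin d → ℝ) → ℝ} {e₀ : ι} {v : Fin d → ℝ} {M : Matrix (Fin d) (Fin d) ℝ}
    (hM : M.BlockTriangular (· ∈ barPa E i)) (hunit : IsUnit M)
    (hdep : ∀ e, DependsOnlyOn (barPa E i) (p e))
    (hdiff : ∀ e, DifferentiableAt ℝ (p e) (M *ᵥ v))
    (h : NonDegenerateAt E i p e₀ (M *ᵥ v)) :
    NonDegenerateAt E i (fun e w => p e (M *ᵥ w)) e₀ v := by
  classical
  obtain ⟨hpos, hspan⟩ := h
  have hratio_dep : ∀ e, DependsOnlyOn (barPa E i) fun z => p e₀ z / p e z :=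
    fun e z z' h => congrArg₂ (· / ·) (hdep e₀ z z' h) (hdep e z z' h)
  have hratio_diff : ∀ e, DifferentiableAt ℝ (fun z => p e₀ z / p e z) (M *ᵥ v) :=
    fun e => by
      simpa only [div_eq_mul_inv] using (hdiff e₀).fun_mul ((hdiff e).fun_inv (hpos e).ne')
  refine ⟨hpos, ?_⟩
  simp only [funext fun e => funext ((hratio_dep e).fderiv_comp_mulVec_single (hratio_diff e))]
  exact Matrix.span_range_vecMul_eq_top hspan (hM.isUnit_toBlock hunit)

section DominationMatrix

variable {d : ℕ} {E : Fin d → Fin d → Prop}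

theorem mem_barPa_of_mem_barDom {i k j : Fin d} (hk : k ∈ barPa E i) (hj : j ∈ barDom E k) :
    j ∈ barPa E i := by
  rcases hj with rfl | ⟨hjk, hch⟩
  · exact hk
  rcases hk with rfl | hki
  · exact Set.mem_insert_of_mem _ hjk
  · exact Set.mem_insert_of_mem _ (hch hki)

theorem IsDAG.ncard_ans_lt (hG : IsDAG E) {j k : Fin d} (h : E j k) :
    (ans E j).ncard < (ans E k).ncard :=
  Set.ncard_lt_ncard ⟨fun _ hx => hx.tail h, fun hsub => hG j (hsub (.single h))⟩

open Classical in
noncomputable def dominationMatrix (R : Type*) [Zero R] [One R] (E : Fin d → Fin d → Prop) :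
    Matrix (Fin d) (Fin d) R :=
  Matrix.of fun i j => if j ∈ barDom E i then 1 else 0

variable {R : Type*}

theorem dominationMatrix_apply_of_mem [Zero R] [One R] {i j : Fin d} (h : j ∈ barDom E i) :
    dominationMatrix R E i j = 1 := by
  simp [dominationMatrix, h]

theorem dominationMatrix_apply_of_notMem [Zero R] [One R] {i j : Fin d} (h : j ∉ barDom E i) :
    dominationMatrix R E i j = 0 := by
  simp [dominationMatrix, h]

theorem blockTriangular_dominationMatrix_barPa [Zero R] [One R] (i : Fin d) :
    (dominationMatrix R E).BlockTriangular (· ∈ barPa E i) :=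
  Matrix.blockTriangular_mem_iff.2 fun _ hk _ hj =>
    dominationMatrix_apply_of_notMem fun h => hj (mem_barPa_of_mem_barDom hk h)

theorem blockTriangular_dominationMatrix_ans [Zero R] [One R] (hG : IsDAG E) :
    (dominationMatrix R E).BlockTriangular fun k => OrderDual.toDual (ans E k).ncard := by
  intro i j hij
  refine dominationMatrix_apply_of_notMem ?_
  rintro (rfl | ⟨hji, -⟩)
  · exact lt_irrefl _ hij
  · exact (hG.ncard_ans_lt hji).not_gt hij

theorem det_dominationMatrix [CommRing R] (hG : IsDAG E) : (dominationMatrix R E).det = 1 := by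
  classical
  rw [(blockTriangular_dominationMatrix_ans hG).det]
  refine Finset.prod_eq_one fun a _ => ?_
  -- on a level set of the ancestor count the only dominating node of `i` is `i` itself
  suffices hblock : (dominationMatrix R E).toSquareBlock
      (fun k => OrderDual.toDual (ans E k).ncard) a = 1 by rw [hblock, det_one]
  ext ⟨i, hi⟩ ⟨j, hj⟩
  simp only [Matrix.toSquareBlock_def, Matrix.of_apply, Matrix.one_apply, Subtype.mk.injEq]
  split_ifs with hij
  · exact dominationMatrix_apply_of_mem (hij ▸ Set.mem_insert i _)
  · refine dominationMatrix_apply_of_notMem ?_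
    rintro (rfl | ⟨hji, -⟩)
    · exact hij rfl
    · exact (hG.ncard_ans_lt hji).ne (OrderDual.toDual.injective (hj.trans hi.symm))

end DominationMatrix

theorem nonparametric_ambiguity_general
    {d : ℕ} {ι : Type*}
    (E : Fin d → Fin d → Prop) (hG : IsDAG E)
    (part : ι → Fin d)
    -- the ground-truth conditional factors and joint densities
    (pfac : ι → Fin d → (Fin d → ℝ) → ℝ)
    (hpdep : ∀ e i, DependsOnlyOn (barPa E i) (pfac e i))
    (pJ : ι → (Fin d → ℝ) → ℝ)
    (hpJ : ∀ e z, pJ e z = ∏ i, pfac e i z)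
    -- (i) continuously differentiable factors, everywhere-positive joint density
    (hpC1 : ∀ e i, ContDiff ℝ 1 (pfac e i))
    (hppos : ∀ e z, 0 < pJ e z)
    -- (ii) each group `𝔈ᵢ` is a set of single-node soft interventions on node `i`
    (hint_p : ∀ i : Fin d, ∀ e₁ e₂ : ι, part e₁ = i → part e₂ = i → e₁ ≠ e₂ →
        ∀ j, (pfac e₁ j = pfac e₂ j ↔ j ≠ i))
    -- (iii) non-degeneracy at every point
    (hndp : ∀ i : Fin d, ∃ e₀ : {e : ι // part e = i}, ∀ zhat : Fin d → ℝ,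
        NonDegenerateAt E i (fun e : {e : ι // part e = i} => pfac e.1 i) e₀ zhat) :
    ∃ m minv : (Fin d → ℝ) → (Fin d → ℝ),
      ContDiff ℝ 1 m ∧ ContDiff ℝ 1 minv ∧
      Function.LeftInverse minv m ∧ Function.RightInverse minv m ∧
      ∃ qfac : ι → Fin d → (Fin d → ℝ) → ℝ,
        -- (i') factorization over the SAME graph `G`, C¹ factors, positive joint
        (∀ e i, DependsOnlyOn (barPa E i) (qfac e i)) ∧
        (∀ e i, ContDiff ℝ 1 (qfac e i)) ∧
        (∀ e (v : Fin d → ℝ), 0 < ∏ i, qfac e i v) ∧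
        -- `q_E` is the density of `v = m(z)`: change of variables
        (∀ e (z : Fin d → ℝ),
          (∏ i, qfac e i (m z)) * |((fderiv ℝ m z).toLinearMap).det| = pJ e z) ∧
        -- (ii') single-node soft interventions for the same partition
        (∀ i : Fin d, ∀ e₁ e₂ : ι, part e₁ = i → part e₂ = i → e₁ ≠ e₂ →
            ∀ j, (qfac e₁ j = qfac e₂ j ↔ j ≠ i)) ∧
        -- (iii') non-degeneracy at every point
        (∀ i : Fin d, ∃ e₀ : {e : ι // part e = i}, ∀ vhat : Fin d → ℝ,
            NonDegenerateAt E i (fun e : {e : ι // part e = i} => qfac e.1 i) e₀ vhat) ∧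
        -- (iv) the effect-domination ambiguity is realized
        (∀ i j, j ∈ barDom E i → ∀ z : Fin d → ℝ,
            fderiv ℝ (fun w => m w i) z (Pi.single j 1) ≠ 0) := by
  have hdet : (dominationMatrix ℝ E).det = 1 := det_dominationMatrix hG
  have htri := blockTriangular_dominationMatrix_barPa (R := ℝ) (E := E)
  have hdom : ∀ i j, j ∈ barDom E i → dominationMatrix ℝ E i j = 1 :=
    fun _ _ => dominationMatrix_apply_of_mem
  generalize dominationMatrix ℝ E = L at hdet htri hdom
  have hunit : IsUnit L := (L.isUnit_iff_isUnit_det).2 (hdet ▸ isUnit_one)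
  have : Invertible L := hunit.invertible
  have hinv_tri : ∀ i, L⁻¹.BlockTriangular (· ∈ barPa E i) := fun i =>
    Matrix.blockTriangular_inv_of_blockTriangular (htri i)
  have hleft : ∀ z, L⁻¹ *ᵥ (L *ᵥ z) = z := fun z => by simp [Matrix.mulVec_mulVec]
  have hright : ∀ v, L *ᵥ (L⁻¹ *ᵥ v) = v := fun v => by simp [Matrix.mulVec_mulVec]
  refine ⟨fun z => L *ᵥ z, fun v => L⁻¹ *ᵥ v, contDiff_mulVec L, contDiff_mulVec L⁻¹,
    hleft, hright, fun e i v => pfac e i (L⁻¹ *ᵥ v),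
    fun e i => (hpdep e i).comp_mulVec (hinv_tri i),
    fun e i => (hpC1 e i).comp (contDiff_mulVec _), fun e v => hpJ e _ ▸ hppos e _,
    fun e z => ?_, fun i e₁ e₂ h₁ h₂ hne j => ?_, fun i => ?_, fun i j hj z => ?_⟩
  · dsimp only
    rw [hleft z, det_fderiv_mulVec, hdet, abs_one, mul_one, hpJ]
  · have hsurj : Function.Surjective fun v => L⁻¹ *ᵥ v := fun z => ⟨L *ᵥ z, hleft z⟩
    exact hsurj.injective_comp_right.eq_iff.trans (hint_p i e₁ e₂ h₁ h₂ hne j)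
  · obtain ⟨e₀, he₀⟩ := hndp i
    exact ⟨e₀, fun v => (he₀ _).comp_mulVec (hinv_tri i) (Matrix.isUnit_nonsing_inv_iff.2 hunit)
      (fun e => hpdep e.1 i) fun e => (hpC1 e.1 i).differentiable one_ne_zero _⟩
  · rw [fderiv_mulVec_apply_single, hdom i j hj]
    exact one_ne_zero

/-- Effect-domination ambiguity is unavoidable for non-parametric models
(Theorem 8.2): given a ground-truth model satisfying (i)–(iii), there is a
diffeomorphism `m` whose induced model satisfies (i')–(iii') for the same graph
and partition, yet `∂m_i/∂z_j ≠ 0` everywhere for every `j ∈ \bar{dom}_G(i)`. -/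
theorem nonparametric_ambiguity
    {d : ℕ} {ι : Type*} [Fintype ι]
    (E : Fin d → Fin d → Prop) (hG : IsDAG E)
    (part : ι → Fin d)
    -- the ground-truth conditional factors and joint densities
    (pfac : ι → Fin d → (Fin d → ℝ) → ℝ)
    (hpdep : ∀ e i, DependsOnlyOn (barPa E i) (pfac e i))
    (pJ : ι → (Fin d → ℝ) → ℝ)
    (hpJ : ∀ e z, pJ e z = ∏ i, pfac e i z)
    -- (i) continuously differentiable factors, everywhere-positive joint density
    (hpC1 : ∀ e i, ContDiff ℝ 1 (pfac e i))
    (hppos : ∀ e z, 0 < pJ e z)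
    (hpprob : ∀ e, ∫ z : Fin d → ℝ, pJ e z = 1)
    -- (ii) each group `𝔈ᵢ` is a set of single-node soft interventions on node `i`
    (hint_p : ∀ i : Fin d, ∀ e₁ e₂ : ι, part e₁ = i → part e₂ = i → e₁ ≠ e₂ →
        ∀ j, (pfac e₁ j = pfac e₂ j ↔ j ≠ i))
    -- (iii) non-degeneracy at every point
    (hndp : ∀ i : Fin d, ∃ e₀ : {e : ι // part e = i}, ∀ zhat : Fin d → ℝ,
        NonDegenerateAt E i (fun e : {e : ι // part e = i} => pfac e.1 i) e₀ zhat) :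
    ∃ m minv : (Fin d → ℝ) → (Fin d → ℝ),
      ContDiff ℝ 1 m ∧ ContDiff ℝ 1 minv ∧
      Function.LeftInverse minv m ∧ Function.RightInverse minv m ∧
      ∃ qfac : ι → Fin d → (Fin d → ℝ) → ℝ,
        -- (i') factorization over the SAME graph `G`, C¹ factors, positive joint
        (∀ e i, DependsOnlyOn (barPa E i) (qfac e i)) ∧
        (∀ e i, ContDiff ℝ 1 (qfac e i)) ∧
        (∀ e (v : Fin d → ℝ), 0 < ∏ i, qfac e i v) ∧
        -- `q_E` is the density of `v = m(z)`: change of variables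
        (∀ e (z : Fin d → ℝ),
          (∏ i, qfac e i (m z)) * |((fderiv ℝ m z).toLinearMap).det| = pJ e z) ∧
        -- (ii') single-node soft interventions for the same partition
        (∀ i : Fin d, ∀ e₁ e₂ : ι, part e₁ = i → part e₂ = i → e₁ ≠ e₂ →
            ∀ j, (qfac e₁ j = qfac e₂ j ↔ j ≠ i)) ∧
        -- (iii') non-degeneracy at every point
        (∀ i : Fin d, ∃ e₀ : {e : ι // part e = i}, ∀ vhat : Fin d → ℝ,
            NonDegenerateAt E i (fun e : {e : ι // part e = i} => qfac e.1 i) e₀ vhat) ∧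
        -- (iv) the effect-domination ambiguity is realized
        (∀ i j, j ∈ barDom E i → ∀ z : Fin d → ℝ,
            fderiv ℝ (fun w => m w i) z (Pi.single j 1) ≠ 0) :=
  nonparametric_ambiguity_general E hG part pfac hpdep pJ hpJ hpC1 hppos hint_p hndp
end
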